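/- Fix ρ ∈ (0, cot²θ) and a Lipschitz cutoff χ : ℝ → [0,1] with χ(t) = 1 for |t| ≤ 1 and χ(t) = 0 for |t| ≥ 2, and for n > 0 set h_n(x₂) = F(x₂ tan θ)^ρ · χ(x₂/n). Then R(h_n) → R(g_ρ) as n → +∞, where g_ρ(x₂) = F(x₂ tan θ)^ρ. -/

import Mathlib

open Real MeasureTheory Set Filter

/-- `F α t = ∫_{-∞}^t e^{-α|x|} dx`. -/
noncomputable def F (α t : ℝ) : ℝ := ∫ x in Iio t, exp (-α * |x|)

/-- The half-plane-like domain `Ω = {(x₁,x₂) : x₁ < x₂ tan θ}`. -/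
def Omg (θ : ℝ) : Set (ℝ × ℝ) := {p | p.1 < p.2 * tan θ}

/-- The functional `R(g) = ∫ g'·(g'·F(x tanθ) − g·e^{-α|x|tanθ}·cot θ) dx`. -/
noncomputable def Rfun (α θ : ℝ) (g : ℝ → ℝ) : ℝ :=
  ∫ x : ℝ, deriv g x *
    (deriv g x * F α (x * tan θ) - g x * exp (-α * |x| * tan θ) * cot θ)

/-- The quantity `Λ(θ)` from the upper bound for the lowest eigenvalue. -/
noncomputable def Lam (θ : ℝ) : ℝ :=
  3 * cos θ ^ 6 * ((2:ℝ) ^ (2 * cos θ ^ 2) - 1) ^ 2 /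
    (2 * (1 + 2 * cos θ ^ 2) ^ 3 *
      (108 + 180 * cos θ ^ 2 - 132 * cos θ ^ 4 + 45 * cos θ ^ 6 - 5 * cos θ ^ 8))

/-!
For fixed `x`, once `n > |x|` the cutoff `χ(·/n)` equals `1` near `x`, so the integrands of
`R(h_n)` and `R(g_ρ)` agree at `x` for all large `n`, and the theorem is dominated convergence.
The majorant comes from an `n`-independent `L²` bound `D` on `h_n'`: `|g_ρ'(x)| ≤ C e^{-c|x|}`,
and the cutoff adds at most `|g_ρ| K / n ≤ M K / n`, only where `|x| ≤ 2n`, hence at most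
`3 M K / (1 + |x|)`. As `F ≤ 2 / α` and `|h_n| ≤ M`, the integrand is then bounded by
`(2 / α + M) D² + M b²` with `b = e^{-α|x| tan θ} cot θ ∈ L²`.
-/

open scoped Topology NNReal

theorem integrable_exp_neg_mul_abs {a : ℝ} (ha : 0 < a) :
    Integrable fun x : ℝ => exp (-a * |x|) := by
  rw [← integrableOn_univ, ← Iic_union_Ioi (a := (0 : ℝ)), integrableOn_union]
  constructor
  · refine (integrableOn_exp_mul_Iic ha 0).congr_fun (fun x hx => ?_) measurableSet_Iic
    rw [abs_of_nonpos hx, mul_neg, neg_mul, neg_neg]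
  · refine (integrableOn_exp_mul_Ioi (neg_lt_zero.2 ha) 0).congr_fun (fun x hx => ?_)
      measurableSet_Ioi
    rw [abs_of_pos hx]

theorem integral_exp_neg_mul_abs {a : ℝ} (ha : 0 < a) :
    ∫ x : ℝ, exp (-a * |x|) = 2 / a := by
  rw [integral_comp_abs (f := fun x => exp (-a * x)), integral_exp_mul_Ioi (neg_lt_zero.2 ha),
    mul_zero, exp_zero, neg_div_neg_eq, mul_one_div]

theorem memLp_two_exp_neg_mul_abs {a : ℝ} (ha : 0 < a) :
    MemLp (fun x : ℝ => exp (-a * |x|)) 2 := by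
  refine (memLp_two_iff_integrable_sq (by fun_prop)).2 ?_
  refine (integrable_exp_neg_mul_abs (mul_pos two_pos ha)).congr (ae_of_all _ fun x => ?_)
  simp only [← exp_nat_mul]
  ring_nf

theorem memLp_two_inv_one_add_abs : MemLp (fun x : ℝ => (1 + |x|)⁻¹) 2 := by
  refine (memLp_two_iff_integrable_sq (by fun_prop)).2 ?_
  refine integrable_inv_one_add_sq.mono' (by fun_prop) (ae_of_all _ fun x => ?_)
  rw [norm_pow, norm_inv, norm_of_nonneg (by positivity), inv_pow]
  gcongr
  nlinarith [abs_nonneg x, sq_abs x]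

theorem memLp_two_mul_exp_add_div_one_add_abs {c : ℝ} (hc : 0 < c) (C B : ℝ) :
    MemLp (fun x : ℝ => C * exp (-c * |x|) + B / (1 + |x|)) 2 := by
  simpa only [div_eq_mul_inv, Pi.add_def] using
    ((memLp_two_exp_neg_mul_abs hc).const_mul C).add (memLp_two_inv_one_add_abs.const_mul B)

theorem abs_deriv_mul_le_of_lipschitzWith {g ψ : ℝ → ℝ} {g' x : ℝ} {L : ℝ≥0}
    (hg : HasDerivAt g g' x) (hψ : LipschitzWith L ψ) (hψ1 : ∀ t, |ψ t| ≤ 1) :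
    |deriv (fun y => g y * ψ y) x| ≤ |g'| + |g x| * L := by
  by_cases hd : DifferentiableAt ℝ (fun y => g y * ψ y) x
  swap
  · rw [deriv_zero_of_not_differentiableAt hd, abs_zero]
    positivity
  have hslope : ∀ y, |slope (fun y => g y * ψ y) x y| ≤ |slope g x y| + |g x| * L := by
    intro y
    rcases eq_or_ne y x with rfl | hyx
    · simp only [slope_same, abs_zero]
      positivity
    have hψxy : |ψ y - ψ x| ≤ L * |y - x| := by
      simpa only [dist_eq_norm, norm_eq_abs] using hψ.dist_le_mul y x
    have hsplit : slope (fun y => g y * ψ y) x y =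
        slope g x y * ψ y + g x * ((ψ y - ψ x) / (y - x)) := by
      simp only [slope_def_field]
      field_simp [sub_ne_zero.2 hyx]
      ring
    rw [hsplit]
    refine (abs_add_le _ _).trans (add_le_add ?_ ?_)
    · rw [abs_mul]
      exact mul_le_of_le_one_right (abs_nonneg _) (hψ1 y)
    · rw [abs_mul, abs_div]
      gcongr
      rwa [div_le_iff₀ (abs_pos.2 (sub_ne_zero.2 hyx))]
  exact le_of_tendsto_of_tendsto' (hasDerivAt_iff_tendsto_slope.1 hd.hasDerivAt).abs
    ((hasDerivAt_iff_tendsto_slope.1 hg).abs.add_const _) hslope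

theorem mul_cutoff_eventuallyEq {g χ : ℝ → ℝ} (hχ1 : ∀ t, |t| ≤ 1 → χ t = 1) {n x : ℝ}
    (hx : |x| < n) : (fun y => g y * χ (y / n)) =ᶠ[𝓝 x] g := by
  have hn : 0 < n := (abs_nonneg x).trans_lt hx
  filter_upwards [(continuous_abs.tendsto x).eventually_lt_const hx] with y hy
  rw [hχ1 _ (by rw [abs_div, abs_of_pos hn]; exact (div_le_one hn).2 hy.le), mul_one]

theorem abs_deriv_mul_cutoff_le {g χ : ℝ → ℝ} {g' x M n : ℝ} {K : ℝ≥0} (hn : 1 ≤ n)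
    (hg : HasDerivAt g g' x) (hgM : |g x| ≤ M) (hχ : LipschitzWith K χ)
    (hχ1 : ∀ t, |χ t| ≤ 1) (hχ0 : ∀ t, 2 ≤ |t| → χ t = 0) :
    |deriv (fun y => g y * χ (y / n)) x| ≤ |g'| + 3 * M * K / (1 + |x|) := by
  have hn0 : 0 < n := one_pos.trans_le hn
  have hM : 0 ≤ M := (abs_nonneg _).trans hgM
  rcases lt_or_ge (2 * n) |x| with hx | hx
  · have hzero : (fun y => g y * χ (y / n)) =ᶠ[𝓝 x] fun _ => 0 := by
      filter_upwards [(continuous_abs.tendsto x).eventually_const_lt hx] with y hy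
      rw [hχ0 _ (by rw [abs_div, abs_of_pos hn0, le_div_iff₀ hn0]; linarith), mul_zero]
    rw [hzero.deriv_eq, deriv_const, abs_zero]
    positivity
  have hlip : LipschitzWith (K * ‖n⁻¹‖₊) fun y => χ (y / n) := by
    have := hχ.comp (lipschitzWith_smul (α := ℝ) n⁻¹)
    simpa only [Function.comp_def, smul_eq_mul, div_eq_inv_mul] using this
  calc |deriv (fun y => g y * χ (y / n)) x| ≤ |g'| + |g x| * ↑(K * ‖n⁻¹‖₊) :=
        abs_deriv_mul_le_of_lipschitzWith hg hlip fun t => hχ1 _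
    _ = |g'| + |g x| * K / n := by
        rw [NNReal.coe_mul, coe_nnnorm, norm_inv, norm_of_nonneg hn0.le]; ring
    _ ≤ |g'| + 3 * M * K / (1 + |x|) := by
        gcongr |g'| + ?_
        rw [div_le_div_iff₀ hn0 (by positivity)]
        have := mul_le_mul (mul_le_mul_of_nonneg_right hgM K.coe_nonneg)
          (show 1 + |x| ≤ 3 * n by linarith) (by positivity) (mul_nonneg hM K.coe_nonneg)
        linarith

theorem abs_mul_mul_sub_mul_le {u v a b D A M : ℝ} (hu : |u| ≤ D) (hv : |v| ≤ M) (ha : |a| ≤ A) :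
    |u * (u * a - v * b)| ≤ (A + M) * D ^ 2 + M * b ^ 2 := by
  have hD : 0 ≤ D := (abs_nonneg u).trans hu
  have hM : 0 ≤ M := (abs_nonneg v).trans hv
  have hDb : D * |b| ≤ D ^ 2 + b ^ 2 := by nlinarith [sq_nonneg (D - |b|), sq_abs b, abs_nonneg b]
  calc |u * (u * a - v * b)| ≤ |u| * (|u| * |a| + |v| * |b|) := by
        rw [abs_mul u, ← abs_mul u a, ← abs_mul v b]
        exact mul_le_mul_of_nonneg_left (abs_sub _ _) (abs_nonneg u)
    _ ≤ D * (D * A + M * |b|) := by gcongr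
    _ ≤ (A + M) * D ^ 2 + M * b ^ 2 := by nlinarith [mul_le_mul_of_nonneg_left hDb hM]

theorem tendsto_integral_deriv_mul_sub_of_eventuallyEq {ι : Type*} {l : Filter ι}
    [l.IsCountablyGenerated] {h : ι → ℝ → ℝ} {g a b D : ℝ → ℝ} {A M : ℝ}
    (hh : ∀ n, AEStronglyMeasurable (h n)) (ha : AEStronglyMeasurable a)
    (hhM : ∀ n x, |h n x| ≤ M) (haA : ∀ x, |a x| ≤ A) (hD : MemLp D 2) (hb : MemLp b 2)
    (hhD : ∀ᶠ n in l, ∀ x, |deriv (h n) x| ≤ D x)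
    (hhg : ∀ x, ∀ᶠ n in l, h n =ᶠ[𝓝 x] g) :
    Tendsto (fun n => ∫ x, deriv (h n) x * (deriv (h n) x * a x - h n x * b x)) l
      (𝓝 (∫ x, deriv g x * (deriv g x * a x - g x * b x))) := by
  have hderiv : ∀ n, AEStronglyMeasurable (deriv (h n)) :=
    fun n => (measurable_deriv _).aestronglyMeasurable
  refine tendsto_integral_filter_of_dominated_convergence
    (fun x => (A + M) * D x ^ 2 + M * b x ^ 2)
    (Eventually.of_forall fun n => (hderiv n).mul (((hderiv n).mul ha).sub ((hh n).mul hb.1)))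
    ?_ ((hD.integrable_sq.const_mul _).add (hb.integrable_sq.const_mul _))
    (ae_of_all _ fun x => ?_)
  · filter_upwards [hhD] with n hn
    exact ae_of_all _ fun x => abs_mul_mul_sub_mul_le (hn x) (hhM n x) (haA x)
  · refine tendsto_const_nhds.congr' ?_
    filter_upwards [hhg x] with n hn
    rw [hn.deriv_eq, hn.eq_of_nhds]

section F

variable {α : ℝ}

theorem F_eq_setIntegral_Iic (t : ℝ) : F α t = ∫ x in Iic t, exp (-α * |x|) :=
  (integral_Iic_eq_integral_Iio' (measure_singleton t)).symm

theorem F_of_nonpos (hα : 0 < α) {t : ℝ} (ht : t ≤ 0) : F α t = exp (α * t) / α := by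
  rw [F_eq_setIntegral_Iic, ← integral_exp_mul_Iic hα t]
  refine setIntegral_congr_fun measurableSet_Iic fun x hx => ?_
  rw [abs_of_nonpos (hx.out.trans ht), mul_neg, neg_mul, neg_neg]

theorem F_mono (hα : 0 < α) : Monotone (F α) := fun _ _ hst =>
  setIntegral_mono_set (integrable_exp_neg_mul_abs hα).integrableOn
    (ae_of_all _ fun _ => (exp_pos _).le) (Iio_subset_Iio hst).eventuallyLE

theorem exp_mul_min_div_le_F (hα : 0 < α) (t : ℝ) : exp (α * min t 0) / α ≤ F α t :=
  F_of_nonpos hα (min_le_right t 0) ▸ F_mono hα (min_le_left t 0)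

theorem F_pos (hα : 0 < α) (t : ℝ) : 0 < F α t :=
  (div_pos (exp_pos _) hα).trans_le (exp_mul_min_div_le_F hα t)

theorem F_le (hα : 0 < α) (t : ℝ) : F α t ≤ 2 / α :=
  integral_exp_neg_mul_abs hα ▸ setIntegral_le_integral (integrable_exp_neg_mul_abs hα)
    (ae_of_all _ fun _ => (exp_pos _).le)

theorem hasDerivAt_F (hα : 0 < α) (t : ℝ) : HasDerivAt (F α) (exp (-α * |t|)) t := by
  have hint := integrable_exp_neg_mul_abs hα
  have hcont : Continuous fun x : ℝ => exp (-α * |x|) := by fun_prop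
  have hF : F α = fun u => F α 0 + ∫ x in (0 : ℝ)..u, exp (-α * |x|) := by
    ext u
    rw [F_eq_setIntegral_Iic, F_eq_setIntegral_Iic,
      ← intervalIntegral.integral_Iic_sub_Iic hint.integrableOn hint.integrableOn]
    ring
  rw [hF]
  exact (intervalIntegral.integral_hasDerivAt_right hint.intervalIntegrable
    (hcont.stronglyMeasurableAtFilter _ _) hcont.continuousAt).const_add _

theorem continuous_F (hα : 0 < α) : Continuous (F α) :=
  continuous_iff_continuousAt.2 fun t => (hasDerivAt_F hα t).continuousAt

theorem F_rpow_sub_one_mul_exp_le (hα : 0 < α) {ρ : ℝ} (t : ℝ) :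
    F α t ^ (ρ - 1) * exp (-α * |t|) ≤
      max (α ^ (1 - ρ)) ((2 / α) ^ (ρ - 1)) * exp (-(min ρ 1 * α) * |t|) := by
  rcases le_or_gt ρ 1 with hρ1 | hρ1
  -- On `t ≤ 0`, `F α t ^ (ρ - 1) = α ^ (1 - ρ) e^{(1 - ρ) α |t|}`, which cuts the rate to `ρ α`.
  · have hF : F α t ^ (ρ - 1) ≤ α ^ (1 - ρ) * exp ((ρ - 1) * (α * min t 0)) := by
      calc F α t ^ (ρ - 1) ≤ (exp (α * min t 0) / α) ^ (ρ - 1) :=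
            rpow_le_rpow_of_nonpos (by positivity) (exp_mul_min_div_le_F hα t) (by linarith)
        _ = α ^ (1 - ρ) * exp ((ρ - 1) * (α * min t 0)) := by
            rw [div_rpow (exp_pos _).le hα.le, ← exp_mul, div_eq_mul_inv, ← rpow_neg hα.le,
              neg_sub, mul_comm (α * _)]
            ring
    have hmin : -|t| ≤ min t 0 := le_min (neg_abs_le t) (neg_nonpos.2 (abs_nonneg t))
    have hexp : (ρ - 1) * (α * min t 0) + -α * |t| ≤ -(min ρ 1 * α) * |t| := by
      rw [min_eq_left hρ1]
      nlinarith [mul_le_mul_of_nonneg_left hmin (mul_nonneg (sub_nonneg.2 hρ1) hα.le)]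
    calc F α t ^ (ρ - 1) * exp (-α * |t|)
        ≤ α ^ (1 - ρ) * exp ((ρ - 1) * (α * min t 0)) * exp (-α * |t|) := by gcongr
      _ ≤ α ^ (1 - ρ) * exp (-(min ρ 1 * α) * |t|) := by
          rw [mul_assoc, ← exp_add]; gcongr
      _ ≤ _ := by gcongr; exact le_max_left _ _
  · calc F α t ^ (ρ - 1) * exp (-α * |t|) ≤ (2 / α) ^ (ρ - 1) * exp (-α * |t|) := by
          gcongr
          exacts [(F_pos hα t).le, F_le hα t]
      _ ≤ _ := by
          rw [min_eq_right hρ1.le, one_mul]; gcongr; exact le_max_right _ _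

theorem abs_F_rpow_le (hα : 0 < α) {ρ : ℝ} (hρ : 0 ≤ ρ) (t : ℝ) : |F α t ^ ρ| ≤ (2 / α) ^ ρ := by
  rw [abs_of_nonneg (rpow_nonneg (F_pos hα t).le _)]
  exact rpow_le_rpow (F_pos hα t).le (F_le hα t) hρ

theorem hasDerivAt_F_mul_rpow (hα : 0 < α) (s ρ x : ℝ) :
    HasDerivAt (fun x => F α (x * s) ^ ρ)
      (ρ * F α (x * s) ^ (ρ - 1) * (exp (-α * |x * s|) * s)) x := by
  have hF : HasDerivAt (fun x => F α (x * s)) (exp (-α * |x * s|) * s) x :=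
    HasDerivAt.comp (h₂ := F α) x (hasDerivAt_F hα (x * s)) (hasDerivAt_mul_const s)
  exact (hasDerivAt_rpow_const (Or.inl (F_pos hα (x * s)).ne')).comp x hF

theorem abs_deriv_F_mul_rpow_le (hα : 0 < α) {s ρ : ℝ} (hs : 0 < s) (hρ : 0 ≤ ρ) (x : ℝ) :
    |ρ * F α (x * s) ^ (ρ - 1) * (exp (-α * |x * s|) * s)| ≤
      ρ * s * max (α ^ (1 - ρ)) ((2 / α) ^ (ρ - 1)) * exp (-(min ρ 1 * α * s) * |x|) := by
  have hF := (F_pos hα (x * s)).le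
  have habs : |x * s| = |x| * s := by rw [abs_mul, abs_of_pos hs]
  rw [abs_of_nonneg (by positivity)]
  calc ρ * F α (x * s) ^ (ρ - 1) * (exp (-α * |x * s|) * s)
      = ρ * s * (F α (x * s) ^ (ρ - 1) * exp (-α * |x * s|)) := by ring
    _ ≤ ρ * s * (max (α ^ (1 - ρ)) ((2 / α) ^ (ρ - 1)) * exp (-(min ρ 1 * α) * |x * s|)) := by
        exact mul_le_mul_of_nonneg_left (F_rpow_sub_one_mul_exp_le hα _) (by positivity)
    _ = _ := by rw [habs]; ring_nf

end F

theorem Rfun_eq (α θ : ℝ) (g : ℝ → ℝ) : Rfun α θ g = ∫ x, deriv g x *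
    (deriv g x * F α (x * tan θ) - g x * (exp (-(α * tan θ) * |x|) * cot θ)) := by
  simp only [Rfun]
  congr 1
  ext x
  ring_nf

/-- `R(h_n) → R(g_ρ)` as `n → ∞`, where `h_n = g_ρ · χ(·/n)`. -/
theorem R_of_h_n_tendsto (α θ : ℝ) (hα : 0 < α) (hθ : θ ∈ Ioo 0 (π/2))
    (ρ : ℝ) (hρ : ρ ∈ Ioo 0 (cot θ ^ 2))
    (χ : ℝ → ℝ) (hχlip : ∃ K, LipschitzWith K χ)
    (hχ01 : ∀ t, χ t ∈ Icc (0:ℝ) 1)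
    (hχ1 : ∀ t, |t| ≤ 1 → χ t = 1)
    (hχ0 : ∀ t, 2 ≤ |t| → χ t = 0) :
    Tendsto (fun n : ℝ => Rfun α θ (fun x => F α (x * tan θ) ^ ρ * χ (x / n)))
      atTop (nhds (Rfun α θ (fun x => F α (x * tan θ) ^ ρ))) := by
  obtain ⟨K, hK⟩ := hχlip
  have hs : 0 < tan θ := tan_pos_of_pos_of_lt_pi_div_two hθ.1 hθ.2
  have hρ0 : 0 < ρ := hρ.1
  set s := tan θ
  set M := (2 / α) ^ ρ
  set C := ρ * s * max (α ^ (1 - ρ)) ((2 / α) ^ (ρ - 1))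
  set c := min ρ 1 * α * s
  have hFs : Continuous fun x => F α (x * s) := (continuous_F hα).comp (continuous_mul_const s)
  have hgM : ∀ x, |F α (x * s) ^ ρ| ≤ M := fun x => abs_F_rpow_le hα hρ0.le _
  have hχ_abs : ∀ t, |χ t| ≤ 1 := fun t => abs_le.2 ⟨by linarith [(hχ01 t).1], (hχ01 t).2⟩
  have hhD : ∀ᶠ n in atTop, ∀ x, |deriv (fun y => F α (y * s) ^ ρ * χ (y / n)) x| ≤
      C * exp (-c * |x|) + 3 * M * K / (1 + |x|) := by
    filter_upwards [eventually_ge_atTop 1] with n hn x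
    exact (abs_deriv_mul_cutoff_le hn (hasDerivAt_F_mul_rpow hα s ρ x) (hgM x) hK hχ_abs
      hχ0).trans (add_le_add_left (abs_deriv_F_mul_rpow_le hα hs hρ0.le x) _)
  simp only [Rfun_eq]
  exact tendsto_integral_deriv_mul_sub_of_eventuallyEq
    (fun n => ((hFs.rpow_const fun _ => Or.inr hρ0.le).mul
      (hK.continuous.comp (continuous_id.div_const n))).aestronglyMeasurable)
    hFs.aestronglyMeasurable
    (fun n x => by
      rw [abs_mul]; exact (mul_le_of_le_one_right (abs_nonneg _) (hχ_abs _)).trans (hgM x))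
    (fun x => by rw [abs_of_pos (F_pos hα _)]; exact F_le hα _)
    (memLp_two_mul_exp_add_div_one_add_abs (by positivity) C (3 * M * K))
    ((memLp_two_exp_neg_mul_abs (mul_pos hα hs)).mul_const _) hhD
    fun x => (eventually_gt_atTop |x|).mono fun n hn => mul_cutoff_eventuallyEq hχ1 hn
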